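/- arXiv:1706.04396 — 2 statements merged into one kernel-verified Lean document; each statement's English description precedes it below -/
import Mathlib

section
/- Let (E, e) and (M, d) be complete separable metric spaces and set 𝓗 = {T ∈ F(E × M) : for every (x₁, y₁), (x₂, y₂) ∈ T, e(x₁, x₂) = d(y₁, y₂)}. Then 𝓗 belongs to 𝓑_{F(E × M)}; for each T ∈ 𝓗 the projection π(T) of T onto E is a closed subset of E; the map π : 𝓗 → F(E) is measurable with respect to the Effros Borel structures; and consequently π(𝓗) is Souslin in the Effros Borel space (F(E), 𝓑_{F(E)}). -/
open Set Topology TopologicalSpace MeasureTheory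

/-- The Effros Borel structure on the collection of closed subsets of `X`. -/
def effrosSigma (X : Type*) [TopologicalSpace X] :
    MeasurableSpace {A : Set X // IsClosed A} :=
  MeasurableSpace.generateFrom
    {𝓤 : Set {A : Set X // IsClosed A} |
      ∃ U : Set X, IsOpen U ∧ 𝓤 = {A : {A : Set X // IsClosed A} | ((A : Set X) ∩ U).Nonempty}}

/-- `𝓐` is the result of the Souslin operation applied to `m`-measurable sets. -/
def IsSouslinIn {α : Type*} (m : MeasurableSpace α) (𝓐 : Set α) : Prop :=
  ∃ f : List ℕ → Set α, (∀ s, MeasurableSet[m] (f s)) ∧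
    𝓐 = ⋃ σ : ℕ → ℕ, ⋂ n : ℕ, f (List.ofFn fun i : Fin n => σ i)

/-- dim X ≤ 0 : `X` has a base consisting of clopen sets (or is empty). -/
def ZeroDimensional (X : Type*) [TopologicalSpace X] : Prop :=
  ∃ B : Set (Set X), (∀ s ∈ B, IsClopen s) ∧ IsTopologicalBasis B

/-- Every point of `S` is isolated in the subspace `S`. -/
def RelativelyDiscrete {E : Type*} [TopologicalSpace E] (S : Set E) : Prop :=
  ∀ x ∈ S, ∃ U : Set E, IsOpen U ∧ U ∩ S = {x}

/-- countable union of zero-dimensional subspaces -/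
def CountableDimensional (X : Type*) [TopologicalSpace X] : Prop :=
  ∃ C : ℕ → Set X, (⋃ n, C n) = univ ∧ ∀ n, ZeroDimensional (C n)

/-- F₀(X): nonempty zero-dimensional closed sets -/
def zeroDimClosedSets (X : Type*) [TopologicalSpace X] :
    Set {A : Set X // IsClosed A} :=
  {A | (A : Set X).Nonempty ∧ ZeroDimensional (A : Set X)}

/-- The Vietoris topology on the collection of closed subsets of `X`. -/
def vietoris (X : Type*) [TopologicalSpace X] :
    TopologicalSpace {A : Set X // IsClosed A} :=
  TopologicalSpace.generateFrom
    ({𝓤 | ∃ U : Set X, IsOpen U ∧ 𝓤 = {A : {A : Set X // IsClosed A} | (A : Set X) ⊆ U}} ∪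
     {𝓤 | ∃ U : Set X, IsOpen U ∧
        𝓤 = {A : {A : Set X // IsClosed A} | ((A : Set X) ∩ U).Nonempty}})

/-- The Wijsman topology on nonempty closed subsets of a metric space. -/
noncomputable def wijsman (E : Type*) [MetricSpace E] :
    TopologicalSpace {A : Set E // IsClosed A ∧ A.Nonempty} :=
  ⨅ z : E, TopologicalSpace.induced (fun A => Metric.infDist z (A : Set E)) inferInstance

/-- `𝓗`: the closed subsets of `E × M` that are graphs of partial isometries. -/
def isomGraphs (E M : Type*) [MetricSpace E] [MetricSpace M] :
    Set {A : Set (E × M) // IsClosed A} :=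
  {T | ∀ p ∈ (T : Set (E × M)), ∀ q ∈ (T : Set (E × M)), dist p.1 q.1 = dist p.2 q.2}

/-- `π(T)`: the projection of `T ⊆ E × M` onto `E` (written via its closure so that
it is always a closed set; on `𝓗` the projection is itself closed). -/
noncomputable def projE (E M : Type*) [MetricSpace E] [MetricSpace M]
    (T : {A : Set (E × M) // IsClosed A}) : {A : Set E // IsClosed A} :=
  ⟨closure (Prod.fst '' (T : Set (E × M))), isClosed_closure⟩

/-!
Measurability of `𝓗` and of `π` reduces to the generating hit sets: `T ∉ 𝓗` iff `T` meets two
basic open sets `U`, `V` with `U × V` inside the open set `{e ≠ d}`, and `π(T)` meets `U` iff `T`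
meets `U × M`. Projections of sets in `𝓗` are closed because an isometric partial map sends Cauchy
sequences to Cauchy sequences.

For the Souslin part fix dense sequences `u` in `E` and `w` in `E × M`. A nonempty closed `A` lies in
`π(𝓗)` iff some isometric sequence `z` in `E × M` has its first coordinates in `A`, with `z (k, l)`
within `2⁻ˡ` of `u k` whenever `A` meets the ball `B(u k, 2⁻ˡ)`. Coding each `z i` by indices
`σ (i, n)` of `2⁻ⁿ`-approximations `w (σ (i, n))` turns this into a Souslin scheme each of whose
conditions involves two values of `σ` and one hit set.
-/
open Filter Metric

local notation "𝓕 " X:max => {A : Set X // IsClosed A}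

section Effros

variable {X : Type*} [TopologicalSpace X]

theorem measurableSet_hit {U : Set X} (hU : IsOpen U) :
    MeasurableSet[effrosSigma X] {A : 𝓕 X | ((A : Set X) ∩ U).Nonempty} :=
  MeasurableSpace.measurableSet_generateFrom ⟨U, hU, rfl⟩

theorem measurableSet_eq_empty :
    MeasurableSet[effrosSigma X] {A : 𝓕 X | (A : Set X) = ∅} := by
  convert (measurableSet_hit (X := X) isOpen_univ).compl using 1
  ext A
  simp [not_nonempty_iff_eq_empty]

theorem measurable_effros_of_hit {α : Type*} [MeasurableSpace α] {f : α → 𝓕 X}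
    (hf : ∀ U, IsOpen U → MeasurableSet {a | ((f a : Set X) ∩ U).Nonempty}) :
    Measurable[_, effrosSigma X] f :=
  measurable_generateFrom <| by rintro _ ⟨U, hU, rfl⟩; exact hf U hU

theorem measurable_closure_image {Y : Type*} [TopologicalSpace Y] {f : X → Y}
    (hf : Continuous f) :
    Measurable[effrosSigma X, effrosSigma Y]
      fun A : 𝓕 X => (⟨closure (f '' A), isClosed_closure⟩ : 𝓕 Y) := by
  let := effrosSigma X
  refine measurable_effros_of_hit fun U hU => ?_
  simp_rw [closure_inter_open_nonempty_iff hU, image_inter_nonempty_iff]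
  exact measurableSet_hit (hU.preimage hf)

theorem measurableSet_exists_mem_mem_open [SecondCountableTopology X] {W : Set (X × X)}
    (hW : IsOpen W) :
    MeasurableSet[effrosSigma X]
      {A : 𝓕 X | ∃ p ∈ (A : Set X), ∃ q ∈ (A : Set X), (p, q) ∈ W} := by
  obtain ⟨b, hbc, -, hb⟩ := exists_countable_basis X
  have hcover : {A : 𝓕 X | ∃ p ∈ (A : Set X), ∃ q ∈ (A : Set X), (p, q) ∈ W} =
      ⋃ U ∈ b, ⋃ V ∈ b, ⋃ (_ : U ×ˢ V ⊆ W),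
        {A : 𝓕 X | ((A : Set X) ∩ U).Nonempty} ∩ {A : 𝓕 X | ((A : Set X) ∩ V).Nonempty} := by
    ext A
    simp only [mem_ofPred_eq, mem_iUnion, mem_inter_iff, exists_prop]
    constructor
    · rintro ⟨p, hp, q, hq, hpq⟩
      obtain ⟨_, ⟨U, hU, V, hV, rfl⟩, hpqUV, hUV⟩ :=
        (hb.prod hb).exists_subset_of_mem_open hpq hW
      exact ⟨U, hU, V, hV, hUV, ⟨p, hp, hpqUV.1⟩, ⟨q, hq, hpqUV.2⟩⟩
    · rintro ⟨U, -, V, -, hUV, ⟨p, hp, hpU⟩, ⟨q, hq, hqV⟩⟩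
      exact ⟨p, hp, q, hq, hUV ⟨hpU, hqV⟩⟩
  rw [hcover]
  exact .biUnion hbc fun U hU => .biUnion hbc fun V hV => .iUnion fun _ =>
    (measurableSet_hit (hb.isOpen hU)).inter (measurableSet_hit (hb.isOpen hV))

end Effros

section Souslin

variable {α : Type*} {m : MeasurableSpace α}

theorem MeasurableSet.isSouslinIn {s : Set α} (hs : MeasurableSet[m] s) : IsSouslinIn m s :=
  ⟨fun _ => s, fun _ => hs, by simp only [iInter_const, iUnion_const]⟩

open Encodable in
theorem isSouslinIn_iUnion_iInter {ι : Type*} [Denumerable ι] (C : ι → ι → ℕ → ℕ → Set α)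
    (hC : ∀ p q a b, MeasurableSet[m] (C p q a b)) :
    IsSouslinIn m (⋃ σ : ι → ℕ, ⋂ (p) (q), C p q (σ p) (σ q)) := by
  set f : List ℕ → Set α := fun s =>
    ⋂ (p) (q) (hp : encode p < s.length) (hq : encode q < s.length),
      C p q s[encode p] s[encode q]
  have hprefix : ∀ τ : ℕ → ℕ, ⋂ n : ℕ, f (List.ofFn fun i : Fin n => τ i) =
      ⋂ (p) (q), C p q (τ (encode p)) (τ (encode q)) := by
    intro τ
    ext x
    simp only [f, mem_iInter, List.length_ofFn, List.getElem_ofFn]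
    refine ⟨fun h p q => h (max (encode p) (encode q) + 1) p q (by omega) (by omega),
      fun h n p q _ _ => h p q⟩
  refine ⟨f, fun s => .iInter fun p => .iInter fun q => .iInter fun _ => .iInter fun _ =>
    hC _ _ _ _, ?_⟩
  simp_rw [hprefix]
  ext x
  simp only [mem_iUnion]
  exact ⟨fun ⟨σ, h⟩ => ⟨σ ∘ Denumerable.ofNat ι, by simpa using h⟩,
    fun ⟨τ, h⟩ => ⟨τ ∘ encode, h⟩⟩

end Souslin

section Metric

theorem le_of_tendsto_of_le_add_pow {f : ℕ → ℝ} {x c K : ℝ} (hf : Tendsto f atTop (𝓝 x))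
    (h : ∀ n, f n ≤ c + K * (1 / 2) ^ n) : x ≤ c := by
  have hlim : Tendsto (fun n => c + K * (1 / 2 : ℝ) ^ n) atTop (𝓝 (c + K * 0)) :=
    tendsto_const_nhds.add
      (tendsto_const_nhds.mul (tendsto_pow_atTop_nhds_zero_of_lt_one (by norm_num) (by norm_num)))
  simpa using le_of_tendsto_of_tendsto' hf hlim h

theorem cauchySeq_of_dist_le_pow {X : Type*} [PseudoMetricSpace X] {c : ℕ → X}
    (h : ∀ n m, dist (c n) (c m) ≤ (1 / 2) ^ n + (1 / 2) ^ m) : CauchySeq c := by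
  refine cauchySeq_of_le_tendsto_0 (fun N => 2 * (1 / 2 : ℝ) ^ N) (fun n m N hn hm => ?_) ?_
  · have hn' := pow_le_pow_of_le_one (by norm_num : (0 : ℝ) ≤ 1 / 2) (by norm_num) hn
    have hm' := pow_le_pow_of_le_one (by norm_num : (0 : ℝ) ≤ 1 / 2) (by norm_num) hm
    linarith [h n m]
  · simpa using (tendsto_pow_atTop_nhds_zero_of_lt_one (by norm_num : (0 : ℝ) ≤ 1 / 2)
      (by norm_num)).const_mul 2

variable {E M : Type*} [PseudoMetricSpace E] [PseudoMetricSpace M]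

theorem dist_fst_le_dist (p q : E × M) : dist p.1 q.1 ≤ dist p q :=
  Prod.dist_eq (x := p) ▸ le_max_left _ _

theorem dist_snd_le_dist (p q : E × M) : dist p.2 q.2 ≤ dist p q :=
  Prod.dist_eq (x := p) ▸ le_max_right _ _

theorem abs_dist_fst_sub_dist_snd_le (a b c d : E × M) :
    |dist a.1 b.1 - dist a.2 b.2| ≤ |dist c.1 d.1 - dist c.2 d.2| + 2 * (dist a c + dist b d) := by
  have h₁ := dist_dist_dist_le a.1 b.1 c.1 d.1
  have h₂ := dist_dist_dist_le a.2 b.2 c.2 d.2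
  rw [Real.dist_eq, abs_le] at h₁ h₂
  rw [abs_le]
  constructor <;> linarith [neg_abs_le (dist c.1 d.1 - dist c.2 d.2),
    le_abs_self (dist c.1 d.1 - dist c.2 d.2), dist_fst_le_dist a c, dist_fst_le_dist b d,
    dist_snd_le_dist a c, dist_snd_le_dist b d]

theorem isClosed_fst_image_of_dist_snd_le [CompleteSpace M] {T : Set (E × M)} (hT : IsClosed T)
    (hdist : ∀ p ∈ T, ∀ q ∈ T, dist p.2 q.2 ≤ dist p.1 q.1) : IsClosed (Prod.fst '' T) := by
  refine isClosed_of_closure_subset fun x hx => ?_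
  obtain ⟨xs, hxs, hlim⟩ := mem_closure_iff_seq_limit.1 hx
  choose p hpT hp₁ using hxs
  have hcauchy : CauchySeq fun n => (p n).2 := by
    refine Metric.cauchySeq_iff.2 fun ε hε => ?_
    obtain ⟨N, hN⟩ := Metric.cauchySeq_iff.1 hlim.cauchySeq ε hε
    refine ⟨N, fun m hm n hn => (hdist _ (hpT m) _ (hpT n)).trans_lt ?_⟩
    simpa only [hp₁] using hN m hm n hn
  obtain ⟨y, hy⟩ := cauchySeq_tendsto_of_complete hcauchy
  have hp : Tendsto p atTop (𝓝 (x, y)) := by simpa only [← hp₁] using hlim.prodMk_nhds hy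
  exact ⟨(x, y), hT.mem_of_tendsto hp (.of_forall hpT), rfl⟩

end Metric

section IsomGraphs

variable {E M : Type*} [MetricSpace E] [MetricSpace M]

theorem measurableSet_isomGraphs [SeparableSpace E] [SeparableSpace M] :
    MeasurableSet[effrosSigma (E × M)] (isomGraphs E M) := by
  have hW : IsOpen {pq : (E × M) × (E × M) | dist pq.1.1 pq.2.1 ≠ dist pq.1.2 pq.2.2} :=
    isOpen_ne_fun (by fun_prop) (by fun_prop)
  convert (measurableSet_exists_mem_mem_open hW).compl using 1
  ext T
  simp [isomGraphs]

theorem isClosed_fst_image_of_mem_isomGraphs [CompleteSpace M] {T : 𝓕 (E × M)}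
    (hT : T ∈ isomGraphs E M) : IsClosed (Prod.fst '' (T : Set (E × M))) :=
  isClosed_fst_image_of_dist_snd_le T.2 fun p hp q hq => (hT p hp q hq).ge

theorem measurable_projE : Measurable[effrosSigma (E × M), effrosSigma E] (projE E M) :=
  measurable_closure_image continuous_fst

theorem closure_mem_isomGraphs {S : Set (E × M)}
    (hS : ∀ p ∈ S, ∀ q ∈ S, dist p.1 q.1 = dist p.2 q.2) :
    (⟨closure S, isClosed_closure⟩ : 𝓕 (E × M)) ∈ isomGraphs E M := by
  have hclosed : IsClosed {pq : (E × M) × (E × M) | dist pq.1.1 pq.2.1 = dist pq.1.2 pq.2.2} :=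
    isClosed_eq (by fun_prop) (by fun_prop)
  have hprod : closure S ×ˢ closure S ⊆
      {pq : (E × M) × (E × M) | dist pq.1.1 pq.2.1 = dist pq.1.2 pq.2.2} := by
    rw [← closure_prod_eq]
    exact closure_minimal (fun pq hpq => hS _ hpq.1 _ hpq.2) hclosed
  exact fun p hp q hq => hprod (mk_mem_prod hp hq)

theorem projE_image_isomGraphs_of_isEmpty [IsEmpty (E × M)] :
    projE E M '' isomGraphs E M = {A : 𝓕 E | (A : Set E) = ∅} := by
  ext A
  constructor
  · rintro ⟨T, -, rfl⟩
    simp [projE, Set.eq_empty_of_isEmpty (T : Set (E × M))]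
  · intro hA
    exact ⟨⟨∅, isClosed_empty⟩, fun p => isEmptyElim p,
      Subtype.ext (by simpa [projE] using hA.symm)⟩

/-- The first coordinates of `z` lie in `A`, and `z (k, l)` is within `2⁻ˡ` of `u k` whenever `A`
meets the ball `B(u k, 2⁻ˡ)`; for dense `u` this makes them dense in `A`. -/
def IsIsomEnum (u : ℕ → E) (A : Set E) (z : ℕ × ℕ → E × M) : Prop :=
  (∀ i j, dist (z i).1 (z j).1 = dist (z i).2 (z j).2) ∧ (∀ i, (z i).1 ∈ A) ∧
    ∀ i : ℕ × ℕ, (A ∩ ball (u i.1) ((1 / 2) ^ i.2)).Nonempty →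
      dist (z i).1 (u i.1) ≤ (1 / 2) ^ i.2

theorem IsIsomEnum.closure_range_fst {u : ℕ → E} (hu : DenseRange u) {A : Set E}
    (hA : IsClosed A) {z : ℕ × ℕ → E × M} (hz : IsIsomEnum u A z) :
    closure (range fun i => (z i).1) = A := by
  obtain ⟨-, hmem, hnear⟩ := hz
  refine (closure_minimal (range_subset_iff.2 hmem) hA).antisymm fun a ha => ?_
  refine Metric.mem_closure_iff.2 fun ε hε => ?_
  obtain ⟨l, hl⟩ := exists_pow_lt_of_lt_one (half_pos hε) (by norm_num : (1 / 2 : ℝ) < 1)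
  obtain ⟨k, hk⟩ := Metric.denseRange_iff.1 hu a _ (by positivity : (0 : ℝ) < (1 / 2) ^ l)
  have hkl := hnear (k, l) ⟨a, ha, mem_ball.2 hk⟩
  refine ⟨_, mem_range_self (k, l), ?_⟩
  calc dist a (z (k, l)).1 ≤ dist a (u k) + dist (z (k, l)).1 (u k) := dist_triangle_right ..
    _ < ε := by dsimp only at hkl; linarith

theorem mem_projE_image_isomGraphs_iff [CompleteSpace M] {u : ℕ → E} (hu : DenseRange u)
    (A : 𝓕 E) :
    A ∈ projE E M '' isomGraphs E M ↔ (A : Set E) = ∅ ∨ ∃ z, IsIsomEnum (M := M) u A z := by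
  constructor
  · rintro ⟨T, hT, rfl⟩
    have hA : ((projE E M T : 𝓕 E) : Set E) = Prod.fst '' (T : Set (E × M)) :=
      (isClosed_fst_image_of_mem_isomGraphs hT).closure_eq
    rw [hA]
    rcases (T : Set (E × M)).eq_empty_or_nonempty with hT₀ | ⟨t₀, ht₀⟩
    · simp [hT₀]
    have hpick : ∀ i : ℕ × ℕ, ∃ t ∈ (T : Set (E × M)),
        (Prod.fst '' (T : Set (E × M)) ∩ ball (u i.1) ((1 / 2) ^ i.2)).Nonempty →
          dist t.1 (u i.1) ≤ (1 / 2) ^ i.2 := by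
      intro i
      by_cases hi : (Prod.fst '' (T : Set (E × M)) ∩ ball (u i.1) ((1 / 2) ^ i.2)).Nonempty
      · obtain ⟨_, ⟨t, ht, rfl⟩, hball⟩ := hi
        exact ⟨t, ht, fun _ => (mem_ball.1 hball).le⟩
      · exact ⟨t₀, ht₀, fun hi' => absurd hi' hi⟩
    choose z hzT hz using hpick
    exact .inr ⟨z, fun i j => hT _ (hzT i) _ (hzT j), fun i => mem_image_of_mem _ (hzT i), hz⟩
  · rintro (hA | ⟨z, hz⟩)
    · exact ⟨⟨∅, isClosed_empty⟩, fun p hp => hp.elim, Subtype.ext (by simp [projE, hA])⟩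
    refine ⟨⟨closure (range z), isClosed_closure⟩, closure_mem_isomGraphs ?_, Subtype.ext ?_⟩
    · rintro _ ⟨i, rfl⟩ _ ⟨j, rfl⟩
      exact hz.1 i j
    · change closure (Prod.fst '' closure (range z)) = A
      rw [closure_image_closure continuous_fst, ← range_comp]
      exact hz.closure_range_fst hu A.2

/-- `A ∈ isomCode u w p q a b` says that `w a` and `w b` may serve as `2^(-p.2)`- and
`2^(-q.2)`-approximations of `z p.1` and `z q.1` for some `z` with `IsIsomEnum u A z`. -/
def isomCode (u : ℕ → E) (w : ℕ → E × M) (p q : (ℕ × ℕ) × ℕ) (a b : ℕ) : Set (𝓕 E) :=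
  {A | (p.1 = q.1 → dist (w a) (w b) ≤ (1 / 2) ^ p.2 + (1 / 2) ^ q.2) ∧
    ((A : Set E) ∩ ball (w a).1 ((1 / 2) ^ p.2)).Nonempty ∧
    (((A : Set E) ∩ ball (u p.1.1) ((1 / 2) ^ p.1.2)).Nonempty →
      dist (w a).1 (u p.1.1) ≤ (1 / 2) ^ p.1.2 + (1 / 2) ^ p.2) ∧
    |dist (w a).1 (w b).1 - dist (w a).2 (w b).2| ≤ 2 * ((1 / 2) ^ p.2 + (1 / 2) ^ q.2)}

theorem measurableSet_isomCode (u : ℕ → E) (w : ℕ → E × M) (p q : (ℕ × ℕ) × ℕ) (a b : ℕ) :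
    MeasurableSet[effrosSigma E] (isomCode u w p q a b) := by
  let := effrosSigma E
  have hit : ∀ x r, Measurable fun A : 𝓕 E => ((A : Set E) ∩ ball x r).Nonempty :=
    fun x r => measurableSet_setOfPred.1 (measurableSet_hit isOpen_ball)
  exact (measurable_const.and ((hit _ _).and (((hit _ _).imp measurable_const).and
    measurable_const))).setOf

variable {u : ℕ → E} {w : ℕ → E × M} {A : 𝓕 E}

theorem IsIsomEnum.exists_isomCode (hw : DenseRange w) {z : ℕ × ℕ → E × M}
    (hz : IsIsomEnum u A z) : ∃ σ : (ℕ × ℕ) × ℕ → ℕ, ∀ p q, A ∈ isomCode u w p q (σ p) (σ q) := by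
  obtain ⟨hiso, hmem, hnear⟩ := hz
  have happrox : ∀ p : (ℕ × ℕ) × ℕ, ∃ a, dist (w a) (z p.1) < (1 / 2) ^ p.2 := fun p => by
    simpa only [dist_comm] using Metric.denseRange_iff.1 hw (z p.1) _ (by positivity)
  choose σ hσ using happrox
  refine ⟨σ, fun p q => ⟨fun hpq => ?_, ⟨(z p.1).1, hmem p.1, ?_⟩, fun hA => ?_, ?_⟩⟩
  · calc dist (w (σ p)) (w (σ q)) ≤ dist (w (σ p)) (z p.1) + dist (w (σ q)) (z p.1) :=
          dist_triangle_right ..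
      _ ≤ _ := add_le_add (hσ p).le (by rw [hpq]; exact (hσ q).le)
  · rw [mem_ball, dist_comm]
    exact (dist_fst_le_dist _ _).trans_lt (hσ p)
  · calc dist (w (σ p)).1 (u p.1.1) ≤ dist (w (σ p)).1 (z p.1).1 + dist (z p.1).1 (u p.1.1) :=
          dist_triangle ..
      _ ≤ (1 / 2) ^ p.2 + (1 / 2) ^ p.1.2 :=
          add_le_add ((dist_fst_le_dist _ _).trans (hσ p).le) (hnear p.1 hA)
      _ = _ := add_comm ..
  · calc _ ≤ |dist (z p.1).1 (z q.1).1 - dist (z p.1).2 (z q.1).2| +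
          2 * (dist (w (σ p)) (z p.1) + dist (w (σ q)) (z q.1)) :=
          abs_dist_fst_sub_dist_snd_le ..
      _ ≤ _ := by
        rw [hiso, sub_self, abs_zero, zero_add]
        gcongr
        exacts [(hσ p).le, (hσ q).le]

theorem exists_isIsomEnum_of_isomCode [CompleteSpace E] [CompleteSpace M]
    {σ : (ℕ × ℕ) × ℕ → ℕ} (hσ : ∀ p q, A ∈ isomCode u w p q (σ p) (σ q)) :
    ∃ z : ℕ × ℕ → E × M, IsIsomEnum u A z := by
  have hlim : ∀ i, ∃ z, Tendsto (fun n => w (σ (i, n))) atTop (𝓝 z) := fun i =>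
    cauchySeq_tendsto_of_complete (cauchySeq_of_dist_le_pow fun n m => (hσ (i, n) (i, m)).1 rfl)
  choose z hz using hlim
  refine ⟨z, fun i j => ?_, fun i => ?_, fun i hi => ?_⟩
  · have h := le_of_tendsto_of_le_add_pow
      (((hz i).fst_nhds.dist (hz j).fst_nhds).sub ((hz i).snd_nhds.dist (hz j).snd_nhds)).abs
      (c := 0) (K := 4) fun n => by linarith [(hσ (i, n) (j, n)).2.2.2]
    exact sub_eq_zero.1 (abs_nonpos_iff.1 h)
  · obtain ⟨a, haA, -⟩ := (hσ (i, 0) (i, 0)).2.1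
    have hinf : infDist (z i).1 A ≤ 0 := le_of_tendsto_of_le_add_pow (K := 1)
      (((continuous_infDist_pt _).tendsto _).comp (hz i).fst_nhds) fun n => by
        obtain ⟨b, hbA, hb⟩ := (hσ (i, n) (i, n)).2.1
        have := infDist_le_dist_of_mem hbA (x := (w (σ (i, n))).1)
        rw [mem_ball, dist_comm] at hb
        dsimp only [Function.comp]
        linarith
    exact (A.2.mem_iff_infDist_zero ⟨a, haA⟩).2 (hinf.antisymm infDist_nonneg)
  · exact le_of_tendsto_of_le_add_pow ((hz i).fst_nhds.dist tendsto_const_nhds)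
      (K := 1) fun n => by linarith [(hσ (i, n) (i, n)).2.2.1 hi]

theorem projE_image_isomGraphs_eq_iUnion [CompleteSpace E] [CompleteSpace M] {u : ℕ → E}
    (hu : DenseRange u) {w : ℕ → E × M} (hw : DenseRange w) :
    projE E M '' isomGraphs E M = ⋃ σ : (ℕ × ℕ) × ℕ → ℕ, ⋂ (p) (q),
      ({A : 𝓕 E | (A : Set E) = ∅} ∪ isomCode u w p q (σ p) (σ q)) := by
  ext A
  simp only [mem_projE_image_isomGraphs_iff hu, mem_iUnion, mem_iInter, mem_union, mem_ofPred_eq]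
  constructor
  · rintro (hA | ⟨z, hz⟩)
    · exact ⟨fun _ => 0, fun _ _ => .inl hA⟩
    · obtain ⟨σ, hσ⟩ := hz.exists_isomCode hw
      exact ⟨σ, fun p q => .inr (hσ p q)⟩
  · rintro ⟨σ, hσ⟩
    by_cases hA : (A : Set E) = ∅
    · exact .inl hA
    · exact .inr (exists_isIsomEnum_of_isomCode fun p q => (hσ p q).resolve_left hA)

theorem isSouslinIn_projE_image_isomGraphs [CompleteSpace E] [SeparableSpace E] [CompleteSpace M]
    [SeparableSpace M] : IsSouslinIn (effrosSigma E) (projE E M '' isomGraphs E M) := by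
  rcases isEmpty_or_nonempty (E × M) with hEM | hEM
  · rw [projE_image_isomGraphs_of_isEmpty]
    exact measurableSet_eq_empty.isSouslinIn
  · have : Nonempty E := hEM.map Prod.fst
    obtain ⟨u, hu⟩ := exists_dense_seq E
    obtain ⟨w, hw⟩ := exists_dense_seq (E × M)
    rw [projE_image_isomGraphs_eq_iUnion hu hw]
    exact isSouslinIn_iUnion_iInter _ fun p q a b =>
      measurableSet_eq_empty.union (measurableSet_isomCode u w p q a b)

end IsomGraphs

theorem isomGraphs_measurable_proj_measurable_image_souslin
    (E M : Type) [MetricSpace E] [CompleteSpace E] [SeparableSpace E]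
    [MetricSpace M] [CompleteSpace M] [SeparableSpace M] :
    MeasurableSet[effrosSigma (E × M)] (isomGraphs E M) ∧
    (∀ T ∈ isomGraphs E M, IsClosed (Prod.fst '' (T : Set (E × M)))) ∧
    @Measurable _ _ ((effrosSigma (E × M)).comap
        (Subtype.val : (isomGraphs E M) → {A : Set (E × M) // IsClosed A}))
      (effrosSigma E)
      (fun T : isomGraphs E M => projE E M (T : {A : Set (E × M) // IsClosed A})) ∧
    IsSouslinIn (effrosSigma E) (projE E M '' isomGraphs E M) :=
  ⟨measurableSet_isomGraphs, fun _ => isClosed_fst_image_of_mem_isomGraphs,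
    measurable_projE.comp (comap_measurable _), isSouslinIn_projE_image_isomGraphs⟩
end

section
/- Let X be a compact metrizable space and let E ⊆ X be an analytic subspace. Equip F(X) with the Vietoris topology. Then the map A ↦ cl_X(A) (closure in X) from F(E) to F(X) is injective, is measurable from 𝓑_{F(E)} to the Borel σ-algebra of F(X), its image {cl_X(A) : A ∈ F(E)} is an analytic subset of F(X), and it maps every Souslin set in (F(E), 𝓑_{F(E)}) onto an analytic subset of F(X). -/
/-!
A closed set `A` of the subspace `E` is the trace `cl_X(A) ∩ E` of its closure. Hence
`A ↦ cl_X(A)` is injective with range `{K | K ⊆ cl_X(K ∩ E)}`, and `cl_X(A)` meets an open `U` iff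
`A` meets `U ∩ E`. Together with the metric criterion "`cl_X(A) ⊆ U` iff `A` misses some thickening
of `X \ U`", this makes the Effros structure of `F(E)` the pullback of the Borel structure of the
Vietoris hyperspace `F(X)`, a compact metrizable, hence Polish, space. Testing `K ⊆ cl_X(K ∩ E)` on
a countable base describes the range through the sets `{K | K ∩ V ∩ E ≠ ∅}`, which are analytic as
projections of the closed membership relation `{(x, K) | x ∈ K}`. So an Effros-measurable set is
mapped onto the range intersected with a Borel set, and the Souslin operation, which commutes with
the injective map, preserves analytic sets.
-/

open Set Topology TopologicalSpace MeasureTheory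

/-- The map `A ↦ cl_X(A)` from closed subsets of `E ⊆ X` to closed subsets of `X`. -/
noncomputable def closureMap {X : Type*} [TopologicalSpace X] (E : Set X)
    (A : {A : Set E // IsClosed A}) : {A : Set X // IsClosed A} :=
  ⟨closure (Subtype.val '' (A : Set E)), isClosed_closure⟩

namespace MeasureTheory

variable {α β : Type*} [TopologicalSpace α] [TopologicalSpace β]

theorem AnalyticSet.union {s t : Set α} (hs : AnalyticSet s) (ht : AnalyticSet t) :
    AnalyticSet (s ∪ t) := by
  rw [union_eq_iUnion]
  exact AnalyticSet.iUnion fun b => by cases b <;> assumption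

theorem AnalyticSet.inter [T2Space α] {s t : Set α} (hs : AnalyticSet s) (ht : AnalyticSet t) :
    AnalyticSet (s ∩ t) := by
  rw [inter_eq_iInter]
  exact AnalyticSet.iInter fun b => by cases b <;> assumption

theorem AnalyticSet.prod {s : Set α} {t : Set β} (hs : AnalyticSet s) (ht : AnalyticSet t) :
    AnalyticSet (s ×ˢ t) := by
  obtain ⟨γ, _, _, f, hf, rfl⟩ := analyticSet_iff_exists_polishSpace_range.1 hs
  obtain ⟨δ, _, _, g, hg, rfl⟩ := analyticSet_iff_exists_polishSpace_range.1 ht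
  rw [← range_prodMap]
  exact analyticSet_range_of_polishSpace (hf.prodMap hg)

theorem AnalyticSet.souslin [T2Space α] {B : List ℕ → Set α} (hB : ∀ s, AnalyticSet (B s)) :
    AnalyticSet (⋃ σ : ℕ → ℕ, ⋂ n : ℕ, B (List.ofFn fun i : Fin n => σ i)) := by
  have hlevel : ∀ n : ℕ,
      AnalyticSet {p : (ℕ → ℕ) × α | p.2 ∈ B (List.ofFn fun i : Fin n => p.1 i)} := by
    intro n
    have : {p : (ℕ → ℕ) × α | p.2 ∈ B (List.ofFn fun i : Fin n => p.1 i)} =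
        ⋃ s : Fin n → ℕ, {σ : ℕ → ℕ | (fun i : Fin n => σ i) = s} ×ˢ B (List.ofFn s) := by
      ext ⟨σ, y⟩
      simp
    rw [this]
    refine AnalyticSet.iUnion fun s => AnalyticSet.prod (IsClosed.analyticSet ?_) (hB _)
    exact isClosed_eq (continuous_pi fun i => continuous_apply _) continuous_const
  have : (⋃ σ : ℕ → ℕ, ⋂ n : ℕ, B (List.ofFn fun i : Fin n => σ i)) =
      Prod.snd '' ⋂ n : ℕ, {p : (ℕ → ℕ) × α | p.2 ∈ B (List.ofFn fun i : Fin n => p.1 i)} := by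
    ext y
    simp
  rw [this]
  exact (AnalyticSet.iInter hlevel).image_of_continuous continuous_snd

end MeasureTheory

theorem polishSpace_of_compactSpace (X : Type*) [TopologicalSpace X] [CompactSpace X]
    [MetrizableSpace X] : PolishSpace X := by
  let := metrizableSpaceMetric X
  infer_instance

theorem closure_subset_iff_exists_disjoint_thickening {X : Type*} [PseudoMetricSpace X]
    {S U : Set X} (hS : IsCompact (closure S)) (hU : IsOpen U) :
    closure S ⊆ U ↔ ∃ n : ℕ, Disjoint S (Metric.thickening (1 / ((n : ℝ) + 1)) Uᶜ) := by
  constructor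
  · intro hSU
    obtain ⟨δ, hδ, hδU⟩ := hS.exists_thickening_subset_open hU hSU
    obtain ⟨n, hn⟩ := exists_nat_one_div_lt hδ
    refine ⟨n, disjoint_left.2 fun x hxS hx => ?_⟩
    obtain ⟨y, hyU, hxy⟩ := Metric.mem_thickening_iff.1 hx
    refine hyU (hδU (Metric.mem_thickening_iff.2 ⟨x, subset_closure hxS, ?_⟩))
    rw [dist_comm]
    linarith
  · rintro ⟨n, hn⟩ x hx
    by_contra hxU
    exact (hn.closure_left Metric.isOpen_thickening).ne_of_mem hx
      (Metric.self_subset_thickening (by positivity) _ hxU) rfl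

attribute [local instance] vietoris

section Vietoris

variable {X : Type*} [TopologicalSpace X]

def hitting (U : Set X) : Set {A : Set X // IsClosed A} :=
  {A | ((A : Set X) ∩ U).Nonempty}

def containedIn (U : Set X) : Set {A : Set X // IsClosed A} :=
  {A | (A : Set X) ⊆ U}

theorem isOpen_hitting {U : Set X} (hU : IsOpen U) : IsOpen (hitting U) :=
  isOpen_generateFrom_of_mem (Or.inr ⟨U, hU, rfl⟩)

theorem isOpen_containedIn {U : Set X} (hU : IsOpen U) : IsOpen (containedIn U) :=
  isOpen_generateFrom_of_mem (Or.inl ⟨U, hU, rfl⟩)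

theorem measurableSet_effrosSigma_hitting {U : Set X} (hU : IsOpen U) :
    MeasurableSet[effrosSigma X] (hitting U) :=
  MeasurableSpace.measurableSet_generateFrom ⟨U, hU, rfl⟩

theorem hitting_sUnion (𝒰 : Set (Set X)) : hitting (⋃₀ 𝒰) = ⋃ U ∈ 𝒰, hitting U := by
  ext A
  simp [hitting, sUnion_eq_biUnion, inter_iUnion₂]

theorem containedIn_sUnion [CompactSpace X] {𝒰 : Set (Set X)} (h𝒰 : ∀ U ∈ 𝒰, IsOpen U) :
    containedIn (⋃₀ 𝒰) = ⋃ 𝒱 ∈ {𝒱 | 𝒱.Finite ∧ 𝒱 ⊆ 𝒰}, containedIn (⋃₀ 𝒱) := by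
  ext A
  simp only [containedIn, mem_ofPred_eq, mem_iUnion, exists_prop]
  constructor
  · intro hA
    rw [sUnion_eq_biUnion] at hA
    obtain ⟨𝒱, h𝒱𝒰, h𝒱, hA𝒱⟩ := A.2.isCompact.elim_finite_subcover_image h𝒰 hA
    exact ⟨𝒱, ⟨h𝒱, h𝒱𝒰⟩, sUnion_eq_biUnion ▸ hA𝒱⟩
  · rintro ⟨𝒱, ⟨-, h𝒱𝒰⟩, hA𝒱⟩
    exact hA𝒱.trans (sUnion_subset_sUnion h𝒱𝒰)

theorem secondCountableTopology_vietoris [CompactSpace X] [SecondCountableTopology X] :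
    SecondCountableTopology {A : Set X // IsClosed A} := by
  set B := countableBasis X
  have hB := isBasis_countableBasis X
  let S : Set (Set {A : Set X // IsClosed A}) :=
    (fun 𝒱 => containedIn (⋃₀ 𝒱)) '' {𝒱 | 𝒱.Finite ∧ 𝒱 ⊆ B} ∪ hitting '' B
  have hS : S.Countable :=
    ((countable_ofPred_finite_subset (countable_countableBasis X)).image _).union
      ((countable_countableBasis X).image _)
  refine ⟨⟨S, hS, le_antisymm (le_generateFrom ?_) (le_generateFrom_iff_subset_isOpen.2 ?_)⟩⟩
  · rintro _ (⟨𝒱, ⟨-, h𝒱⟩, rfl⟩ | ⟨V, hV, rfl⟩)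
    · exact isOpen_containedIn (isOpen_sUnion fun V hV => hB.isOpen (h𝒱 hV))
    · exact isOpen_hitting (hB.isOpen hV)
  · rintro _ (⟨U, hU, rfl⟩ | ⟨U, hU, rfl⟩)
    · change IsOpen[generateFrom S] (containedIn U)
      rw [hB.open_eq_sUnion' hU, containedIn_sUnion fun V hV => hB.isOpen hV.1]
      exact @isOpen_biUnion _ _ (generateFrom S) _ _ fun 𝒱 h𝒱 => isOpen_generateFrom_of_mem
        (Or.inl ⟨𝒱, ⟨h𝒱.1, fun V hV => (h𝒱.2 hV).1⟩, rfl⟩)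
    · change IsOpen[generateFrom S] (hitting U)
      rw [hB.open_eq_sUnion' hU, hitting_sUnion]
      exact @isOpen_biUnion _ _ (generateFrom S) _ _ fun V hV => isOpen_generateFrom_of_mem
        (Or.inr ⟨V, hV.1, rfl⟩)

theorem compactSpace_vietoris [CompactSpace X] : CompactSpace {A : Set X // IsClosed A} := by
  refine compactSpace_generateFrom rfl fun 𝒞 h𝒞 hcov => ?_
  -- `Wᶜ` meets no `V` with `hitting V ∈ 𝒞`, so it lies in some `containedIn U ∈ 𝒞`, and then
  -- finitely many of those `V` cover the compact set `Uᶜ ⊆ W`.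
  set 𝒱 := {V : Set X | IsOpen V ∧ hitting V ∈ 𝒞}
  have hW : IsOpen (⋃₀ 𝒱) := isOpen_sUnion fun V hV => hV.1
  obtain ⟨c, hc𝒞, hWc⟩ : (⟨(⋃₀ 𝒱)ᶜ, hW.isClosed_compl⟩ : {A : Set X // IsClosed A}) ∈ ⋃₀ 𝒞 :=
    hcov ▸ mem_univ _
  rcases h𝒞 hc𝒞 with ⟨U, hU, rfl⟩ | ⟨V, hV, rfl⟩
  · have hUW : Uᶜ ⊆ ⋃ V ∈ 𝒱, V := by
      rw [← sUnion_eq_biUnion]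
      exact fun x hxU => not_not.1 fun hxW => hxU (hWc hxW)
    obtain ⟨𝒱', h𝒱', h𝒱'fin, hU𝒱'⟩ :=
      hU.isClosed_compl.isCompact.elim_finite_subcover_image (fun V hV => hV.1) hUW
    refine ⟨insert (containedIn U) (hitting '' 𝒱'), ?_, (h𝒱'fin.image _).insert _, ?_⟩
    · rintro _ (rfl | ⟨V, hV, rfl⟩)
      exacts [hc𝒞, (h𝒱' hV).2]
    · refine eq_univ_of_forall fun A => ?_
      by_cases hA : (A : Set X) ⊆ U
      · exact ⟨containedIn U, mem_insert _ _, hA⟩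
      · obtain ⟨x, hxA, hxU⟩ := not_subset.1 hA
        obtain ⟨V, hV, hxV⟩ := mem_iUnion₂.1 (hU𝒱' hxU)
        exact ⟨hitting V, mem_insert_of_mem _ (mem_image_of_mem _ hV), x, hxA, hxV⟩
  · obtain ⟨x, hxW, hxV⟩ := hWc
    exact absurd ⟨V, ⟨hV, hc𝒞⟩, hxV⟩ hxW

theorem isClosed_setOf_mem_vietoris [RegularSpace X] :
    IsClosed {p : X × {A : Set X // IsClosed A} | p.1 ∈ (p.2 : Set X)} := by
  refine isOpen_compl_iff.1 (isOpen_prod_iff.2 fun x A hxA => ?_)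
  obtain ⟨U, V, hU, hV, hxU, hAV, hUV⟩ :=
    SeparatedNhds.of_isCompact_isClosed isCompact_singleton A.2 (disjoint_singleton_left.2 hxA)
  exact ⟨U, containedIn V, hU, isOpen_containedIn hV, hxU rfl, hAV,
    fun p hp hmem => hUV.ne_of_mem hp.1 (hp.2 hmem) rfl⟩

theorem t2Space_vietoris [RegularSpace X] : T2Space {A : Set X // IsClosed A} := by
  have key : ∀ A B : {A : Set X // IsClosed A}, ∀ x ∈ (A : Set X), x ∉ (B : Set X) →
      ∃ u v, IsOpen u ∧ IsOpen v ∧ A ∈ u ∧ B ∈ v ∧ Disjoint u v := by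
    intro A B x hxA hxB
    obtain ⟨U, 𝒱, hU, h𝒱, hxU, hB𝒱, hdisj⟩ :=
      isOpen_prod_iff.1 isClosed_setOf_mem_vietoris.isOpen_compl x B hxB
    refine ⟨hitting U, 𝒱, isOpen_hitting hU, h𝒱, ⟨x, hxA, hxU⟩, hB𝒱, disjoint_left.2 ?_⟩
    rintro C ⟨y, hyC, hyU⟩ hC𝒱
    exact hdisj (show (y, C) ∈ U ×ˢ 𝒱 from ⟨hyU, hC𝒱⟩) hyC
  refine ⟨fun A B hAB => ?_⟩
  obtain ⟨x, hx⟩ : ∃ x, ¬(x ∈ (A : Set X) ↔ x ∈ (B : Set X)) := by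
    by_contra! h
    exact hAB (Subtype.ext (Set.ext h))
  by_cases hxA : x ∈ (A : Set X)
  · exact key A B x hxA fun hxB => hx (iff_of_true hxA hxB)
  · obtain ⟨u, v, hu, hv, hBu, hAv, huv⟩ := key B A x (by tauto) hxA
    exact ⟨v, u, hv, hu, hAv, hBu, huv.symm⟩

theorem polishSpace_vietoris [CompactSpace X] [RegularSpace X] [SecondCountableTopology X] :
    PolishSpace {A : Set X // IsClosed A} := by
  have := compactSpace_vietoris (X := X)
  have := t2Space_vietoris (X := X)
  have := secondCountableTopology_vietoris (X := X)
  exact polishSpace_of_compactSpace _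

theorem analyticSet_hitting [CompactSpace X] [MetrizableSpace X] {T : Set X}
    (hT : AnalyticSet T) : AnalyticSet (hitting T) := by
  have := polishSpace_of_compactSpace X
  have := polishSpace_vietoris (X := X)
  have : hitting T =
      Prod.snd '' ({p : X × {A : Set X // IsClosed A} | p.1 ∈ (p.2 : Set X)} ∩ Prod.fst ⁻¹' T) := by
    ext A
    simp [hitting, Set.Nonempty]
  rw [this]
  exact (isClosed_setOf_mem_vietoris.analyticSet.inter
    (hT.preimage continuous_fst)).image_of_continuous continuous_snd

end Vietoris

section ClosureMap

variable {X : Type*} [TopologicalSpace X] (E : Set X)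

theorem image_val_eq_closure_inter (A : {A : Set E // IsClosed A}) :
    Subtype.val '' (A : Set E) = closure (Subtype.val '' (A : Set E)) ∩ E := by
  conv_lhs => rw [← A.2.closure_eq, IsInducing.subtypeVal.closure_eq_preimage_closure_image,
    Subtype.image_preimage_coe]
  exact inter_comm _ _

theorem closureMap_injective : Function.Injective (closureMap E) := by
  intro A B hAB
  have h : Subtype.val '' (A : Set E) = Subtype.val '' (B : Set E) := by
    rw [image_val_eq_closure_inter, image_val_eq_closure_inter E B]
    exact congrArg (· ∩ E) (congrArg Subtype.val hAB)
  exact Subtype.ext (image_injective.2 Subtype.val_injective h)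

theorem range_closureMap :
    range (closureMap E) =
      {K : {A : Set X // IsClosed A} | (K : Set X) ⊆ closure ((K : Set X) ∩ E)} := by
  ext K
  constructor
  · rintro ⟨A, rfl⟩
    change closure _ ⊆ closure (closure (Subtype.val '' (A : Set E)) ∩ E)
    rw [← image_val_eq_closure_inter]
  · intro hK
    refine ⟨⟨Subtype.val ⁻¹' (K : Set X), K.2.preimage continuous_subtype_val⟩, Subtype.ext ?_⟩
    change closure (Subtype.val '' (Subtype.val ⁻¹' (K : Set X))) = K
    rw [Subtype.image_preimage_coe, inter_comm]
    exact (K.2.closure_subset_iff.2 inter_subset_left).antisymm hK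

theorem preimage_closureMap_hitting {U : Set X} (hU : IsOpen U) :
    closureMap E ⁻¹' hitting U = hitting (Subtype.val ⁻¹' U : Set E) := by
  ext A
  exact (closure_inter_open_nonempty_iff hU).trans image_inter_nonempty_iff

theorem range_closureMap_eq_iInter {B : Set (Set X)} (hB : IsTopologicalBasis B) :
    range (closureMap E) = ⋂ V : B, ((hitting (V : Set X))ᶜ ∪ hitting ((V : Set X) ∩ E)) := by
  rw [range_closureMap]
  ext K
  simp only [hitting, mem_ofPred_eq, mem_iInter, mem_union, mem_compl_iff, Subtype.forall]
  constructor
  · intro h V hV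
    rw [or_iff_not_imp_left, not_not]
    rintro ⟨x, hxK, hxV⟩
    obtain ⟨y, hyV, hyK, hyE⟩ := hB.mem_closure_iff.1 (h hxK) V hV hxV
    exact ⟨y, hyK, hyV, hyE⟩
  · intro h x hxK
    refine hB.mem_closure_iff.2 fun V hV hxV => ?_
    obtain ⟨y, hyK, hyV, hyE⟩ := (h V hV).resolve_left (not_not.2 ⟨x, hxK, hxV⟩)
    exact ⟨y, hyV, hyK, hyE⟩

theorem analyticSet_range_closureMap [CompactSpace X] [MetrizableSpace X] (hE : AnalyticSet E) :
    AnalyticSet (range (closureMap E)) := by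
  have := polishSpace_of_compactSpace X
  have := polishSpace_vietoris (X := X)
  have := t2Space_vietoris (X := X)
  have hB := (isBasis_countableBasis X).insert_empty
  have := ((countable_countableBasis X).insert ∅).to_subtype
  rw [range_closureMap_eq_iInter E hB]
  refine AnalyticSet.iInter fun V => AnalyticSet.union ?_ (analyticSet_hitting ?_)
  · exact (isOpen_hitting (hB.isOpen V.2)).isClosed_compl.analyticSet
  · simpa using ((hB.isOpen V.2).analyticSet_image continuous_id).inter hE

theorem comap_closureMap_borel [CompactSpace X] [MetrizableSpace X] :
    (borel {A : Set X // IsClosed A}).comap (closureMap E) = effrosSigma E := by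
  have := secondCountableTopology_vietoris (X := X)
  refine le_antisymm ?_ ?_
  · rw [borel_eq_generateFrom_of_subbasis (t := vietoris X) rfl, MeasurableSpace.comap_generateFrom]
    refine MeasurableSpace.generateFrom_le ?_
    rintro _ ⟨_, ⟨U, hU, rfl⟩ | ⟨U, hU, rfl⟩, rfl⟩
    · let := metrizableSpaceMetric X
      have : closureMap E ⁻¹' containedIn U = ⋃ n : ℕ,
          (hitting (Subtype.val ⁻¹' Metric.thickening (1 / ((n : ℝ) + 1)) Uᶜ : Set E))ᶜ := by
        ext A
        simp only [mem_preimage, containedIn, mem_ofPred_eq, mem_iUnion, mem_compl_iff, hitting,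
          not_nonempty_iff_eq_empty, ← disjoint_iff_inter_eq_empty, ← disjoint_image_left]
        exact closure_subset_iff_exists_disjoint_thickening isClosed_closure.isCompact hU
      change MeasurableSet[effrosSigma E] (closureMap E ⁻¹' containedIn U)
      rw [this]
      exact MeasurableSet.iUnion fun n => (measurableSet_effrosSigma_hitting
        (Metric.isOpen_thickening.preimage continuous_subtype_val)).compl
    · exact (preimage_closureMap_hitting E hU).symm ▸
        measurableSet_effrosSigma_hitting (hU.preimage continuous_subtype_val)
  · refine MeasurableSpace.generateFrom_le ?_
    rintro _ ⟨V, hV, rfl⟩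
    obtain ⟨U, hU, rfl⟩ := isOpen_induced_iff.1 hV
    exact ⟨hitting U, MeasurableSpace.measurableSet_generateFrom (isOpen_hitting hU),
      preimage_closureMap_hitting E hU⟩

theorem analyticSet_image_closureMap [CompactSpace X] [MetrizableSpace X] (hE : AnalyticSet E)
    {M : Set {A : Set E // IsClosed A}} (hM : MeasurableSet[effrosSigma E] M) :
    AnalyticSet (closureMap E '' M) := by
  let := borel {A : Set X // IsClosed A}
  have : BorelSpace {A : Set X // IsClosed A} := ⟨rfl⟩
  have := polishSpace_vietoris (X := X)
  have := t2Space_vietoris (X := X)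
  rw [← comap_closureMap_borel E] at hM
  obtain ⟨T, hT, rfl⟩ := MeasurableSpace.measurableSet_comap.1 hM
  rw [image_preimage_eq_inter_range]
  exact hT.analyticSet.inter (analyticSet_range_closureMap E hE)

end ClosureMap

theorem closureMap_injective_measurable_image_analytic
    {X : Type} [TopologicalSpace X] [CompactSpace X] [MetrizableSpace X]
    (E : Set X) (hE : MeasureTheory.AnalyticSet E) :
    Function.Injective (closureMap E) ∧
    @Measurable _ _ (effrosSigma E) (@borel _ (vietoris X)) (closureMap E) ∧
    @MeasureTheory.AnalyticSet _ (vietoris X) (range (closureMap E)) ∧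
    (∀ 𝓐 : Set {A : Set E // IsClosed A}, IsSouslinIn (effrosSigma E) 𝓐 →
      @MeasureTheory.AnalyticSet _ (vietoris X) (closureMap E '' 𝓐)) := by
  have := t2Space_vietoris (X := X)
  refine ⟨closureMap_injective E, measurable_iff_comap_le.2 (comap_closureMap_borel E).le,
    analyticSet_range_closureMap E hE, ?_⟩
  rintro _ ⟨B, hB, rfl⟩
  simp_rw [image_iUnion, (closureMap_injective E).injOn.image_iInter_eq]
  exact AnalyticSet.souslin fun s => analyticSet_image_closureMap E hE (hB s)
end
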